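/- Let Γ be a finite simple graph, Γ₁ ⊆ Γ an induced subgraph, and g ∈ W_Γ. Then there exist an induced subgraph Γ₂ ⊆ Γ₁ and an element h ∈ W_{Γ₁} such that W_{Γ₁} ∩ g W_{Γ₁} g⁻¹ = h W_{Γ₂} h⁻¹. -/

import Mathlib

/-!
Pick `g' = a g b` with `a, b ∈ W₁ := W_{Γ₁}` of minimal length in the double coset `W₁ g W₁`.
With the exchange condition, minimality makes lengths add: `ℓ (u g') = ℓ u + ℓ g'` and
`ℓ (g' u) = ℓ g' + ℓ u` for `u ∈ W₁`. This yields Kilmoyer's description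
`W₁ ∩ g' W₁ g'⁻¹ = W_{Γ₂}` with `Γ₂ = {v ∈ Γ₁ | g'⁻¹ v g' ∈ W₁}`: if `x = v x'` (reduced) lies in
the intersection, then `y = g'⁻¹ x g' ∈ W₁` and `v` shortens `g' y = x g'`. Exchanging `v` against
a letter of `g'` would contradict minimality, so `v g' = g' y' y⁻¹` with `y'` a subword of `y`,
i.e. `g'⁻¹ v g' ∈ W₁`; now induct on `x'`. Conjugating by `a⁻¹` gives the theorem with `h = a⁻¹`.

For right-angled Coxeter groups the exchange condition comes from the action of `W` on
`W × ℤ/2` in which a generator `s` sends `(t, ε)` to `(s t s, ε + [t = s])`: by it, the parity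
of the number of occurrences of `t` in the right inversion sequence of a word depends only on
the element the word represents.
-/

def racgRels {V : Type*} (G : SimpleGraph V) : Set (FreeGroup V) :=
  {r | (∃ v, r = FreeGroup.of v * FreeGroup.of v) ∨
    ∃ u v, G.Adj u v ∧ r = FreeGroup.of u * FreeGroup.of v * FreeGroup.of u * FreeGroup.of v}

abbrev RACG {V : Type*} (G : SimpleGraph V) : Type _ := PresentedGroup (racgRels G)

def racgGen {V : Type*} (G : SimpleGraph V) (v : V) : RACG G := PresentedGroup.of v

def specialSubgroup {V : Type*} (G : SimpleGraph V) (S : Set V) : Subgroup (RACG G) :=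
  Subgroup.closure (racgGen G '' S)

def linkSet {V : Type*} (G : SimpleGraph V) (S : Set V) : Set V :=
  {u | ∀ s ∈ S, G.Adj u s}

noncomputable def wordLength {V : Type*} (G : SimpleGraph V) (g : RACG G) : ℕ :=
  sInf {n | ∃ l : List V, l.length = n ∧ (l.map (racgGen G)).prod = g}

lemma racgGen_sq {V : Type*} (G : SimpleGraph V) (v : V) :
    racgGen G v * racgGen G v = 1 := by
  have h : (QuotientGroup.mk (FreeGroup.of v * FreeGroup.of v) :
      PresentedGroup (racgRels G)) = 1 := by
    rw [QuotientGroup.eq_one_iff]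
    exact Subgroup.subset_normalClosure (Or.inl ⟨v, rfl⟩)
  first
  | exact h
  | (simp only [racgGen, PresentedGroup.of, ← map_mul]; exact h)

lemma racgGen_comm {V : Type*} (G : SimpleGraph V) {u v : V} (h : G.Adj u v) :
    racgGen G u * racgGen G v * racgGen G u * racgGen G v = 1 := by
  have h' : (QuotientGroup.mk (FreeGroup.of u * FreeGroup.of v * FreeGroup.of u * FreeGroup.of v) :
      PresentedGroup (racgRels G)) = 1 := by
    rw [QuotientGroup.eq_one_iff]
    exact Subgroup.subset_normalClosure (Or.inr ⟨u, v, h, rfl⟩)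
  first
  | exact h'
  | (simp only [racgGen, PresentedGroup.of, ← map_mul]; exact h')

lemma racg_induce_lift {V : Type*} (G : SimpleGraph V) {S : Set V} {H : Type*} [Group H]
    (f : S → H) (hsq : ∀ v : S, f v * f v = 1)
    (hcomm : ∀ u v : S, G.Adj ↑u ↑v → f u * f v * f u * f v = 1) :
    ∀ r ∈ racgRels (G.induce S), FreeGroup.lift f r = 1 := by
  rintro r (⟨v, rfl⟩ | ⟨u, v, hadj, rfl⟩)
  · simpa [map_mul] using hsq v
  · have h' : G.Adj ↑u ↑v := hadj
    simpa [map_mul] using hcomm u v h'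

/-- The canonical homomorphism between special subgroups induced by an inclusion of
vertex sets. -/
def racgMapHom {V : Type*} (G : SimpleGraph V) {S T : Set V} (h : S ⊆ T) :
    RACG (G.induce S) →* RACG (G.induce T) :=
  PresentedGroup.toGroup (f := fun v : S => racgGen (G.induce T) ⟨v.1, h v.2⟩)
    (racg_induce_lift G _
      (fun v => racgGen_sq _ _)
      (fun u v hadj => racgGen_comm (G.induce T) (by exact hadj)))

/-- The canonical homomorphism from the special subgroup on `S` to the full
right-angled Coxeter group. -/
def racgInclHom {V : Type*} (G : SimpleGraph V) (S : Set V) :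
    RACG (G.induce S) →* RACG G :=
  PresentedGroup.toGroup (f := fun v : S => racgGen G ↑v)
    (racg_induce_lift G _
      (fun v => racgGen_sq _ _)
      (fun u v hadj => racgGen_comm G hadj))

lemma mul_mul_mul_eq_one_iff_commute {H : Type*} [Group H] {a b : H} (ha : a * a = 1)
    (hb : b * b = 1) : a * b * a * b = 1 ↔ Commute a b := by
  rw [show a * b * a * b = a * b * (a * b) by simp only [mul_assoc], mul_eq_one_iff_eq_inv,
    mul_inv_rev, inv_eq_of_mul_eq_one_right ha, inv_eq_of_mul_eq_one_right hb]
  rfl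

section ConjParityPerm

variable {W : Type*} [Group W] [DecidableEq W]

/-- For a reflection `w`, this is the action on (reflection, sign) pairs from Tits' proof of the
exchange condition, extended to all of `W × ZMod 2`. -/
def conjParityPerm (w : W) : Equiv.Perm (W × ZMod 2) where
  toFun p := (w * p.1 * w⁻¹, p.2 + if p.1 = w then 1 else 0)
  invFun p := (w⁻¹ * p.1 * w, p.2 + if p.1 = w then 1 else 0)
  left_inv := fun ⟨t, z⟩ => by
    have : w * t * w⁻¹ = w ↔ t = w := by rw [mul_inv_eq_iff_eq_mul, mul_right_inj]
    ext
    · simp only; group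
    · simp only [this, add_assoc, CharTwo.add_self_eq_zero, add_zero]
  right_inv := fun ⟨t, z⟩ => by
    have : w⁻¹ * t * w = w ↔ t = w := by
      rw [mul_assoc, inv_mul_eq_iff_eq_mul, mul_left_inj]
    ext
    · simp only; group
    · simp only [this, add_assoc, CharTwo.add_self_eq_zero, add_zero]

lemma conjParityPerm_apply (w t : W) (z : ZMod 2) :
    conjParityPerm w (t, z) = (w * t * w⁻¹, z + if t = w then 1 else 0) := rfl

lemma conjParityPerm_mul_self {w : W} (hw : w * w = 1) :
    conjParityPerm w * conjParityPerm w = 1 := by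
  rw [mul_eq_one_iff_eq_inv]
  ext ⟨t, z⟩ <;> simp [conjParityPerm, Equiv.Perm.inv_def, inv_eq_of_mul_eq_one_right hw]

lemma conjParityPerm_commute {u v : W} (h : Commute u v) :
    Commute (conjParityPerm u) (conjParityPerm v) := by
  have hconj : ∀ t, v * t * v⁻¹ = u ↔ t = u := fun t => by
    rw [mul_inv_eq_iff_eq_mul, h.eq, mul_right_inj]
  have hconj' : ∀ t, u * t * u⁻¹ = v ↔ t = v := fun t => by
    rw [mul_inv_eq_iff_eq_mul, ← h.eq, mul_right_inj]
  ext ⟨t, z⟩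
  · simp only [Equiv.Perm.mul_apply, conjParityPerm_apply]
    rw [show u * (v * t * v⁻¹) * u⁻¹ = u * v * t * (u * v)⁻¹ by group, h.eq]
    group
  · simp only [Equiv.Perm.mul_apply, conjParityPerm_apply, hconj, hconj', add_assoc,
      add_comm (if t = u then (1 : ZMod 2) else 0)]

end ConjParityPerm

namespace CoxeterSystem

variable {B W : Type*} [Group W] {M : CoxeterMatrix B} (cs : CoxeterSystem M W)

local prefix:100 "s" => cs.simple
local prefix:100 "π" => cs.wordProd
local prefix:100 "ℓ" => cs.length

/-- The exchange condition, in its strong form for arbitrary (not only reduced) words. It holds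
in every Coxeter system; here it is derived from a permutation representation. -/
def ExchangeCondition : Prop :=
  ∀ (ω : List B) (i : B), ℓ (s i * π ω) < ℓ (π ω) →
    ∃ j < ω.length, π (ω.eraseIdx j) = s i * π ω

section ParityRepresentation

variable [DecidableEq W] {φ : W →* Equiv.Perm (W × ZMod 2)}

lemma apply_wordProd_of_conjParityPerm (hφ : ∀ i, φ (s i) = conjParityPerm (s i))
    (ω : List B) (t : W) (z : ZMod 2) :
    φ (π ω) (t, z) =
      (π ω * t * (π ω)⁻¹, z + ((cs.rightInvSeq ω).count t : ZMod 2)) := by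
  induction ω generalizing z with
  | nil => simp
  | cons i ω ih =>
    have hconj : π ω * t * (π ω)⁻¹ = s i ↔ (π ω)⁻¹ * s i * π ω = t := by
      rw [eq_comm (b := t), mul_inv_eq_iff_eq_mul, mul_assoc, eq_inv_mul_iff_mul_eq]
    simp only [wordProd_cons, map_mul, Equiv.Perm.mul_apply, ih, hφ, conjParityPerm_apply,
      rightInvSeq, List.count_cons, beq_iff_eq, hconj, mul_inv_rev, Nat.cast_add]
    refine Prod.ext (by group) ?_
    split_ifs <;> simp [add_assoc]

lemma count_rightInvSeq_eq_of_wordProd_eq (hφ : ∀ i, φ (s i) = conjParityPerm (s i))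
    {ω ω' : List B} (h : π ω = π ω') (t : W) :
    ((cs.rightInvSeq ω).count t : ZMod 2) = (cs.rightInvSeq ω').count t := by
  have := congrArg Prod.snd (cs.apply_wordProd_of_conjParityPerm hφ ω t 0)
  rwa [h, cs.apply_wordProd_of_conjParityPerm hφ ω' t 0, eq_comm, zero_add, zero_add] at this

theorem exchangeCondition_of_conjParityPerm (hφ : ∀ i, φ (s i) = conjParityPerm (s i)) :
    cs.ExchangeCondition := by
  intro ω i hlt
  set t := (π ω)⁻¹ * s i * π ω with ht
  obtain ⟨β, hβ, hβω⟩ := cs.exists_isReduced (s i * π ω)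
  have hiβ : π (i :: β) = π ω := by rw [wordProd_cons, ← hβω, simple_mul_simple_cancel_left]
  have hβt : π β * t = π ω := by
    rw [← hβω, ht, show s i * π ω * ((π ω)⁻¹ * s i * π ω) = s i * s i * π ω by group,
      simple_mul_simple_self, one_mul]
  have ht_not_mem : t ∉ cs.rightInvSeq β := fun hmem => by
    have hinv := (cs.isRightInversion_of_mem_rightInvSeq hβ hmem).2
    rw [hβt, ← hβω] at hinv
    exact lt_asymm hlt hinv
  -- `t` occurs in the right inversion sequence of the word `i :: β` for `π ω` only at its head.
  have hcount : ((cs.rightInvSeq ω).count t : ZMod 2) = 1 := by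
    have hhead : (π β)⁻¹ * s i * π β = t := by
      rw [← hβω, ht, mul_inv_rev, inv_simple, mul_assoc _ (s i), simple_mul_simple_cancel_left]
    rw [← cs.count_rightInvSeq_eq_of_wordProd_eq hφ hiβ t, rightInvSeq, hhead,
      List.count_cons_self, List.count_eq_zero.mpr ht_not_mem]
    rfl
  have hmem : t ∈ cs.rightInvSeq ω := by
    by_contra h
    rw [List.count_eq_zero.mpr h] at hcount
    exact zero_ne_one hcount
  obtain ⟨j, hj, hjt⟩ := List.getElem_of_mem hmem
  rw [length_rightInvSeq] at hj
  refine ⟨j, hj, ?_⟩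
  rw [← cs.wordProd_mul_getD_rightInvSeq, List.getD_eq_getElem _ _ (by simpa using hj), hjt, ht]
  group

end ParityRepresentation

def standardParabolic (S : Set B) : Subgroup W :=
  Subgroup.closure (cs.simple '' S)

variable {cs} {S : Set B}

lemma simple_mem_standardParabolic {i : B} (hi : i ∈ S) : s i ∈ cs.standardParabolic S :=
  Subgroup.subset_closure ⟨i, hi, rfl⟩

lemma wordProd_mem_standardParabolic {ω : List B} (hω : ∀ i ∈ ω, i ∈ S) :
    π ω ∈ cs.standardParabolic S := by
  induction ω with
  | nil => exact one_mem _
  | cons i ω ih =>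
    rw [wordProd_cons]
    exact mul_mem (simple_mem_standardParabolic (hω i List.mem_cons_self))
      (ih fun j hj => hω j (List.mem_cons_of_mem i hj))

lemma exists_wordProd_eq_of_mem_standardParabolic {x : W} (hx : x ∈ cs.standardParabolic S) :
    ∃ ω : List B, (∀ i ∈ ω, i ∈ S) ∧ π ω = x := by
  induction hx using Subgroup.closure_induction with
  | mem _ h =>
    obtain ⟨i, hi, rfl⟩ := h
    exact ⟨[i], by simpa using hi, wordProd_singleton cs i⟩
  | one => exact ⟨[], by simp, wordProd_nil cs⟩
  | mul _ _ _ _ h₁ h₂ =>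
    obtain ⟨ω₁, hω₁, rfl⟩ := h₁
    obtain ⟨ω₂, hω₂, rfl⟩ := h₂
    exact ⟨ω₁ ++ ω₂, fun i hi => (List.mem_append.mp hi).elim (hω₁ i) (hω₂ i),
      wordProd_append cs ω₁ ω₂⟩
  | inv _ _ h =>
    obtain ⟨ω, hω, rfl⟩ := h
    exact ⟨ω.reverse, by simpa using hω, wordProd_reverse cs ω⟩

variable (cs) in
def IsMinimalInDoubleCoset (P : Subgroup W) (g : W) : Prop :=
  ∀ a ∈ P, ∀ b ∈ P, ℓ g ≤ ℓ (a * g * b)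

variable (cs) in
lemma exists_isMinimalInDoubleCoset (P : Subgroup W) (g : W) :
    ∃ a ∈ P, ∃ b ∈ P, cs.IsMinimalInDoubleCoset P (a * g * b) := by
  obtain ⟨⟨a, b⟩, ⟨ha, hb⟩, hmin⟩ :=
    (InvImage.wf (fun p : W × W => ℓ (p.1 * g * p.2)) wellFounded_lt).has_min
      {p | p.1 ∈ P ∧ p.2 ∈ P} ⟨(1, 1), one_mem P, one_mem P⟩
  refine ⟨a, ha, b, hb, fun a' ha' b' hb' => not_lt.mp fun hlt => ?_⟩
  refine hmin (a' * a, b * b') ⟨mul_mem ha' ha, mul_mem hb hb'⟩ ?_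
  simpa only [InvImage, mul_assoc] using hlt

lemma IsMinimalInDoubleCoset.inv {P : Subgroup W} {g : W} (hg : cs.IsMinimalInDoubleCoset P g) :
    cs.IsMinimalInDoubleCoset P g⁻¹ := fun a ha b hb => by
  rw [cs.length_inv, ← cs.length_inv (a * g⁻¹ * b),
    show (a * g⁻¹ * b)⁻¹ = b⁻¹ * g * a⁻¹ by group]
  exact hg b⁻¹ (inv_mem hb) a⁻¹ (inv_mem ha)

namespace ExchangeCondition

lemma exists_isReduced_sublist (hex : cs.ExchangeCondition) (ω : List B) :
    ∃ ω', cs.IsReduced ω' ∧ ω'.Sublist ω ∧ π ω' = π ω := by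
  induction ω with
  | nil => exact ⟨[], by simp [IsReduced], List.Sublist.slnil, rfl⟩
  | cons i ω ih =>
    obtain ⟨ω', hred, hsub, hπ⟩ := ih
    rcases cs.length_simple_mul (π ω') i with h | h
    · refine ⟨i :: ω', ?_, hsub.cons_cons i, by rw [wordProd_cons, wordProd_cons, hπ]⟩
      rw [IsReduced, wordProd_cons, h, hred, List.length_cons]
    · obtain ⟨j, hj, hje⟩ := hex ω' i (by omega)
      refine ⟨ω'.eraseIdx j, ?_, ((List.eraseIdx_sublist ω' j).trans hsub).cons i, ?_⟩
      · rw [IsReduced, hje, List.length_eraseIdx_of_lt hj]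
        rw [IsReduced] at hred
        omega
      · rw [hje, wordProd_cons, hπ]

lemma exists_isReduced_of_mem_standardParabolic (hex : cs.ExchangeCondition) {x : W}
    (hx : x ∈ cs.standardParabolic S) :
    ∃ ω : List B, cs.IsReduced ω ∧ (∀ i ∈ ω, i ∈ S) ∧ π ω = x := by
  obtain ⟨ω, hω, rfl⟩ := exists_wordProd_eq_of_mem_standardParabolic hx
  obtain ⟨ω', hred, hsub, hπ⟩ := hex.exists_isReduced_sublist ω
  exact ⟨ω', hred, fun i hi => hω i (hsub.subset hi), hπ⟩

lemma length_simple_mul_lt_or_exists_eraseIdx (hex : cs.ExchangeCondition) {x : W}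
    {ω : List B} {i : B} (hlt : ℓ (s i * (x * π ω)) < ℓ (x * π ω)) :
    ℓ (s i * x) < ℓ x ∨ ∃ j < ω.length, s i * (x * π ω) = x * π (ω.eraseIdx j) := by
  obtain ⟨α, hα, rfl⟩ := cs.exists_isReduced x
  rw [← wordProd_append] at hlt
  obtain ⟨j, hj, hje⟩ := hex (α ++ ω) i hlt
  rw [wordProd_append] at hje
  by_cases hjα : j < α.length
  · left
    rw [List.eraseIdx_append_of_lt_length hjα, wordProd_append, ← mul_assoc] at hje
    have h := cs.length_wordProd_le (α.eraseIdx j)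
    rw [mul_right_cancel hje, List.length_eraseIdx_of_lt hjα] at h
    rw [IsReduced] at hα
    omega
  · right
    rw [List.eraseIdx_append_of_length_le (not_lt.mp hjα), wordProd_append] at hje
    rw [List.length_append] at hj
    exact ⟨j - α.length, by omega, hje.symm⟩

end ExchangeCondition

namespace IsMinimalInDoubleCoset

variable {g : W}

lemma length_mul_of_mem_left (hex : cs.ExchangeCondition)
    (hg : cs.IsMinimalInDoubleCoset (cs.standardParabolic S) g) {u : W}
    (hu : u ∈ cs.standardParabolic S) : ℓ (u * g) = ℓ u + ℓ g := by
  obtain ⟨ω, hred, hωS, rfl⟩ := hex.exists_isReduced_of_mem_standardParabolic hu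
  rw [hred]
  induction ω with
  | nil => simp
  | cons i ω ih =>
    have hredω : cs.IsReduced ω := by simpa using hred.drop 1
    have hωS' : ∀ j ∈ ω, j ∈ S := fun j hj => hωS j (List.mem_cons_of_mem i hj)
    have ih := ih hredω hωS' (wordProd_mem_standardParabolic hωS')
    rw [wordProd_cons, mul_assoc, List.length_cons]
    rcases cs.length_simple_mul (π ω * g) i with h | h
    · omega
    obtain ⟨γ, hγ, rfl⟩ := cs.exists_isReduced g
    rcases hex.length_simple_mul_lt_or_exists_eraseIdx (by omega : ℓ (s i * (π ω * π γ)) < _)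
      with hlt | ⟨j, hj, hje⟩
    · rw [← wordProd_cons, hred, hredω, List.length_cons] at hlt
      omega
    · have hmin := hg ((π ω)⁻¹ * s i * π ω)
        (mul_mem (mul_mem (inv_mem (wordProd_mem_standardParabolic hωS'))
          (simple_mem_standardParabolic (hωS i List.mem_cons_self)))
          (wordProd_mem_standardParabolic hωS')) 1 (one_mem _)
      rw [mul_one, show (π ω)⁻¹ * s i * π ω * π γ = (π ω)⁻¹ * (s i * (π ω * π γ)) by group,
        hje, inv_mul_cancel_left] at hmin
      have := cs.length_wordProd_le (γ.eraseIdx j)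
      rw [List.length_eraseIdx_of_lt hj] at this
      have hγl : ℓ (π γ) = γ.length := hγ
      omega

lemma length_mul_of_mem_right (hex : cs.ExchangeCondition)
    (hg : cs.IsMinimalInDoubleCoset (cs.standardParabolic S) g) {b : W}
    (hb : b ∈ cs.standardParabolic S) : ℓ (g * b) = ℓ g + ℓ b := by
  rw [← cs.length_inv, mul_inv_rev, hg.inv.length_mul_of_mem_left hex (inv_mem hb),
    cs.length_inv, cs.length_inv, add_comm]

lemma mem_standardParabolic_of_conj_mem (hex : cs.ExchangeCondition)
    (hg : cs.IsMinimalInDoubleCoset (cs.standardParabolic S) g) {x : W}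
    (hx : x ∈ cs.standardParabolic S) (hxg : g⁻¹ * x * g ∈ cs.standardParabolic S) :
    x ∈ cs.standardParabolic {i ∈ S | g⁻¹ * s i * g ∈ cs.standardParabolic S} := by
  obtain ⟨ω, hred, hωS, rfl⟩ := hex.exists_isReduced_of_mem_standardParabolic hx
  induction ω with
  | nil => exact one_mem _
  | cons i ω ih =>
    have hredω : cs.IsReduced ω := by simpa using hred.drop 1
    have hωS' : ∀ j ∈ ω, j ∈ S := fun j hj => hωS j (List.mem_cons_of_mem i hj)
    have hωP : π ω ∈ cs.standardParabolic S := wordProd_mem_standardParabolic hωS'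
    have hiP : s i ∈ cs.standardParabolic S :=
      simple_mem_standardParabolic (hωS i List.mem_cons_self)
    obtain ⟨γ, -, hγS, hγ⟩ := hex.exists_isReduced_of_mem_standardParabolic hxg
    have hdesc : ℓ (s i * (g * π γ)) < ℓ (g * π γ) := by
      have hgγ : g * π γ = s i * π ω * g := by rw [hγ, wordProd_cons]; group
      rw [hgγ, ← mul_assoc, simple_mul_simple_cancel_left,
        hg.length_mul_of_mem_left hex hωP, hg.length_mul_of_mem_left hex (mul_mem hiP hωP),
        ← wordProd_cons, hred, hredω, List.length_cons]
      omega
    have hconj : g⁻¹ * s i * g ∈ cs.standardParabolic S := by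
      rcases hex.length_simple_mul_lt_or_exists_eraseIdx hdesc with hlt | ⟨j, -, hje⟩
      · have := hg (s i) hiP 1 (one_mem _)
        rw [mul_one] at this
        omega
      · rw [show g⁻¹ * s i * g = g⁻¹ * (s i * (g * π γ)) * (π γ)⁻¹ by group, hje,
          inv_mul_cancel_left]
        refine mul_mem (wordProd_mem_standardParabolic fun k hk => hγS k ?_)
          (inv_mem (wordProd_mem_standardParabolic hγS))
        exact (List.eraseIdx_sublist γ j).subset hk
    have hrest : g⁻¹ * π ω * g ∈ cs.standardParabolic S := by
      have h : g⁻¹ * s i * g * (g⁻¹ * π (i :: ω) * g) = g⁻¹ * π ω * g := by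
        rw [wordProd_cons, show g⁻¹ * s i * g * (g⁻¹ * (s i * π ω) * g) =
          g⁻¹ * (s i * (s i * π ω)) * g by group, simple_mul_simple_cancel_left]
      exact h ▸ mul_mem hconj hxg
    rw [wordProd_cons]
    exact mul_mem (simple_mem_standardParabolic ⟨hωS i List.mem_cons_self, hconj⟩)
      (ih hredω hωS' hωP hrest)

theorem standardParabolic_inf_map_conj (hex : cs.ExchangeCondition)
    (hg : cs.IsMinimalInDoubleCoset (cs.standardParabolic S) g) :
    cs.standardParabolic S ⊓ (cs.standardParabolic S).map (MulAut.conj g).toMonoidHom =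
      cs.standardParabolic {i ∈ S | g⁻¹ * s i * g ∈ cs.standardParabolic S} := by
  apply le_antisymm
  · intro x hx
    obtain ⟨hx, hxg⟩ := Subgroup.mem_inf.mp hx
    rw [Subgroup.mem_map_equiv, MulAut.conj_symm_apply] at hxg
    exact hg.mem_standardParabolic_of_conj_mem hex hx hxg
  · refine Subgroup.closure_le _ |>.mpr ?_
    rintro _ ⟨i, ⟨hi, hig⟩, rfl⟩
    refine Subgroup.mem_inf.mpr ⟨simple_mem_standardParabolic hi, ?_⟩
    rwa [Subgroup.mem_map_equiv, MulAut.conj_symm_apply]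

end IsMinimalInDoubleCoset

end CoxeterSystem

section RACGCoxeter

variable {V : Type*} (G : SimpleGraph V)

def racgLift {H : Type*} [Group H] (f : V → H) (hsq : ∀ v, f v * f v = 1)
    (hcomm : ∀ u v, G.Adj u v → f u * f v * f u * f v = 1) : RACG G →* H :=
  PresentedGroup.toGroup (f := f) (by
    rintro r (⟨v, rfl⟩ | ⟨u, v, huv, rfl⟩)
    · simpa using hsq v
    · simpa using hcomm u v huv)

@[simp]
lemma racgLift_racgGen {H : Type*} [Group H] (f : V → H) (hsq : ∀ v, f v * f v = 1)
    (hcomm : ∀ u v, G.Adj u v → f u * f v * f u * f v = 1) (v : V) :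
    racgLift G f hsq hcomm (racgGen G v) = f v :=
  PresentedGroup.toGroup.of _

-- An entry `0` means `m = ∞`, i.e. no relation.
open Classical in
noncomputable def racgCoxeterMatrix : CoxeterMatrix V where
  M := Matrix.of fun u v => if u = v then 1 else if G.Adj u v then 2 else 0
  isSymm := by
    ext u v
    simp only [Matrix.transpose_apply, Matrix.of_apply, eq_comm, G.adj_comm]
  diagonal _ := by simp
  off_diagonal _ _ h := by
    simp only [Matrix.of_apply, if_neg h]
    split <;> simp

lemma racgCoxeterMatrix_isLiftable {H : Type*} [Group H] {f : V → H} (hsq : ∀ v, f v * f v = 1)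
    (hcomm : ∀ u v, G.Adj u v → f u * f v * f u * f v = 1) :
    (racgCoxeterMatrix G).IsLiftable f := by
  intro u v
  by_cases huv : u = v
  · subst huv
    simpa [racgCoxeterMatrix] using hsq u
  by_cases hadj : G.Adj u v
  · simpa [racgCoxeterMatrix, huv, hadj, pow_two, mul_assoc] using hcomm u v hadj
  · simp [racgCoxeterMatrix, huv, hadj]

lemma racgCoxeterMatrix_of_adj {u v : V} (huv : G.Adj u v) : racgCoxeterMatrix G u v = 2 := by
  simp [racgCoxeterMatrix, G.ne_of_adj huv, huv]

noncomputable def racgToCoxeterGroup : RACG G →* (racgCoxeterMatrix G).Group :=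
  racgLift G (racgCoxeterMatrix G).toCoxeterSystem.simple
    (racgCoxeterMatrix G).toCoxeterSystem.simple_mul_simple_self fun u v huv => by
      have h := (racgCoxeterMatrix G).toCoxeterSystem.simple_mul_simple_pow u v
      rwa [racgCoxeterMatrix_of_adj G huv, pow_two, ← mul_assoc] at h

noncomputable def coxeterGroupToRACG : (racgCoxeterMatrix G).Group →* RACG G :=
  (racgCoxeterMatrix G).toCoxeterSystem.lift
    ⟨racgGen G, racgCoxeterMatrix_isLiftable G (racgGen_sq G) fun _ _ => racgGen_comm G⟩

lemma coxeterGroupToRACG_simple (v : V) :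
    coxeterGroupToRACG G ((racgCoxeterMatrix G).toCoxeterSystem.simple v) = racgGen G v :=
  CoxeterSystem.lift_apply_simple _ _ v

noncomputable def racgCoxeterSystem : CoxeterSystem (racgCoxeterMatrix G) (RACG G) :=
  ⟨MonoidHom.toMulEquiv (racgToCoxeterGroup G) (coxeterGroupToRACG G)
    (PresentedGroup.ext fun v => by
      change coxeterGroupToRACG G (racgToCoxeterGroup G (racgGen G v)) = racgGen G v
      rw [racgToCoxeterGroup, racgLift_racgGen, coxeterGroupToRACG_simple])
    (PresentedGroup.ext fun v => by
      change racgToCoxeterGroup G (coxeterGroupToRACG G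
        ((racgCoxeterMatrix G).toCoxeterSystem.simple v)) =
          (racgCoxeterMatrix G).toCoxeterSystem.simple v
      rw [coxeterGroupToRACG_simple, racgToCoxeterGroup, racgLift_racgGen])⟩

@[simp]
lemma racgCoxeterSystem_simple : (racgCoxeterSystem G).simple = racgGen G :=
  funext (coxeterGroupToRACG_simple G)

noncomputable def racgConjParityRep [DecidableEq (RACG G)] :
    RACG G →* Equiv.Perm (RACG G × ZMod 2) :=
  racgLift G (fun v => conjParityPerm (racgGen G v))
    (fun v => conjParityPerm_mul_self (racgGen_sq G v)) fun u v huv =>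
      (mul_mul_mul_eq_one_iff_commute (conjParityPerm_mul_self (racgGen_sq G u))
        (conjParityPerm_mul_self (racgGen_sq G v))).mpr <| conjParityPerm_commute <|
          (mul_mul_mul_eq_one_iff_commute (racgGen_sq G u) (racgGen_sq G v)).mp
            (racgGen_comm G huv)

theorem racgCoxeterSystem_exchangeCondition : (racgCoxeterSystem G).ExchangeCondition := by
  classical
  exact (racgCoxeterSystem G).exchangeCondition_of_conjParityPerm (φ := racgConjParityRep G)
    fun v => by rw [racgCoxeterSystem_simple, racgConjParityRep, racgLift_racgGen]

end RACGCoxeter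

lemma Subgroup.inf_map_conj_eq_map_conj_inf_map_conj {H : Type*} [Group H] {P : Subgroup H}
    {a b : H} (ha : a ∈ P) (hb : b ∈ P) (g : H) :
    P ⊓ P.map (MulAut.conj g).toMonoidHom =
      (P ⊓ P.map (MulAut.conj (a * g * b)).toMonoidHom).map (MulAut.conj a⁻¹).toMonoidHom := by
  ext x
  simp only [Subgroup.mem_inf, Subgroup.mem_map_equiv, MulAut.conj_symm_apply, inv_inv]
  rw [show (a * g * b)⁻¹ * (a * x * a⁻¹) * (a * g * b) = b⁻¹ * (g⁻¹ * x * g) * b by group,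
    P.mul_mem_cancel_right (inv_mem ha), P.mul_mem_cancel_left ha,
    P.mul_mem_cancel_right hb, P.mul_mem_cancel_left (inv_mem hb)]

lemma specialSubgroup_eq_standardParabolic {V : Type*} (G : SimpleGraph V) :
    specialSubgroup G = (racgCoxeterSystem G).standardParabolic := by
  ext1 S
  rw [specialSubgroup, CoxeterSystem.standardParabolic, racgCoxeterSystem_simple]

theorem racg_intersection_conjugate_special_general
    {V : Type*} (G : SimpleGraph V) (Γ₁ : Set V) (g : RACG G) :
    ∃ Γ₂ : Set V, Γ₂ ⊆ Γ₁ ∧ ∃ h ∈ specialSubgroup G Γ₁,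
      specialSubgroup G Γ₁ ⊓
          Subgroup.map (MulAut.conj g).toMonoidHom (specialSubgroup G Γ₁)
        = Subgroup.map (MulAut.conj h).toMonoidHom (specialSubgroup G Γ₂) := by
  rw [specialSubgroup_eq_standardParabolic]
  obtain ⟨a, ha, b, hb, hmin⟩ := (racgCoxeterSystem G).exists_isMinimalInDoubleCoset
    ((racgCoxeterSystem G).standardParabolic Γ₁) g
  exact ⟨_, Set.sep_subset _ _, a⁻¹, inv_mem ha,
    (Subgroup.inf_map_conj_eq_map_conj_inf_map_conj ha hb g).trans <| congrArg _ <|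
      hmin.standardParabolic_inf_map_conj (racgCoxeterSystem_exchangeCondition G)⟩

/-- Intersections of a special subgroup with its conjugates are conjugates of special
subgroups (Proposition 3.4 of Antolín–Minasyan). -/
theorem racg_intersection_conjugate_special
    {V : Type*} [Fintype V] (G : SimpleGraph V) (Γ₁ : Set V) (g : RACG G) :
    ∃ Γ₂ : Set V, Γ₂ ⊆ Γ₁ ∧ ∃ h ∈ specialSubgroup G Γ₁,
      specialSubgroup G Γ₁ ⊓
          Subgroup.map (MulAut.conj g).toMonoidHom (specialSubgroup G Γ₁)
        = Subgroup.map (MulAut.conj h).toMonoidHom (specialSubgroup G Γ₂) :=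
  racg_intersection_conjugate_special_general G Γ₁ g
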